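/- Let A₀ (the 'normed part') satisfy ||[α₀]_N|| ≤ D·N!·C^N and let the L∞ structure maps and the homotopy operator h be bounded by uniform constants (||l_j|| ≤ j!·C^j, ||h|| ≤ C). Suppose the number of admissible decorated rooted trees with N leaves (internal vertices of valency ≥ 3, black/white coloring as in the Maurer–Cartan recursion) is at most 16^N. Then the element α defined by the tree-sum formula [α]_N = ∑_{(T,σ)} ±(1/|Aut T|)·ρ_{(T,σ)} satisfies ||[α]_N|| ≤ D'·N!·E^N for constants D', E independent of N; i.e., α is a bounded cochain. -/

import Mathlib

/-!
Dividing the recursion by `N!` turns it into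
`x N ≤ D C^N + ∑_{j ≥ 2} C^(j+1) ∑_s ∏ x (s i)` for `x N = a N / N!`, the inner sum running over
the compositions `s` of `N` into `j` positive parts. Their number grows like `2^N`, so the induction
cannot be run on a bound `θ E^N` directly; it is run on `x N ≤ θ E^N / N^2` instead. The weight
`n ↦ 1/n^2` is submultiplicative under convolution, `∑_{m+k=n} 1/(m^2 k^2) ≤ 8/n^2`, so its
`j`-fold convolution is at most `8^(j-1)/N^2`. For `θ` small the tree terms then contribute at most
`θ/2 · E^N/N^2`, and `E` large absorbs the source term `D C^N`.
-/

open Finset Finset.Nat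

namespace Finset.Nat

theorem sum_antidiagonalTuple_succ {M : Type*} [AddCommMonoid M] (k n : ℕ)
    (g : (Fin (k + 1) → ℕ) → M) :
    ∑ s ∈ antidiagonalTuple (k + 1) n, g s =
      ∑ p ∈ antidiagonal n, ∑ t ∈ antidiagonalTuple k p.2, g (Fin.cons p.1 t) := by
  simp only [Finset.sum, antidiagonalTuple, Multiset.Nat.antidiagonalTuple,
    List.Nat.antidiagonalTuple, Multiset.map_coe, Multiset.sum_coe, List.flatMap_def,
    List.map_flatten, List.sum_flatten, List.map_map, Function.comp_def]
  rfl

theorem sum_antidiagonalTuple_prod_le {R : Type*} [CommSemiring R] [PartialOrder R]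
    [IsOrderedRing R] {f : ℕ → R} {K : R} (hf : ∀ n, 0 ≤ f n) (hK : 0 ≤ K)
    (hconv : ∀ n, ∑ p ∈ antidiagonal n, f p.1 * f p.2 ≤ K * f n) (k n : ℕ) :
    ∑ s ∈ antidiagonalTuple (k + 1) n, ∏ i, f (s i) ≤ K ^ k * f n := by
  induction k generalizing n with
  | zero => simp
  | succ k ih =>
    calc ∑ s ∈ antidiagonalTuple (k + 2) n, ∏ i, f (s i)
        = ∑ p ∈ antidiagonal n, f p.1 * ∑ t ∈ antidiagonalTuple (k + 1) p.2, ∏ i, f (t i) := by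
          simp only [sum_antidiagonalTuple_succ, Fin.prod_univ_succ, Fin.cons_zero,
            Fin.cons_succ, mul_sum]
      _ ≤ ∑ p ∈ antidiagonal n, f p.1 * (K ^ k * f p.2) := by
          gcongr with p
          exacts [hf _, ih _]
      _ = K ^ k * ∑ p ∈ antidiagonal n, f p.1 * f p.2 := by
          rw [mul_sum]
          exact sum_congr rfl fun p _ => mul_left_comm _ _ _
      _ ≤ K ^ k * (K * f n) := by gcongr; exact hconv n
      _ = K ^ (k + 1) * f n := by ring

def compositionTuple (j N : ℕ) : Finset (Fin j → ℕ) :=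
  (antidiagonalTuple j N).filter fun s => ∀ i, 1 ≤ s i

theorem mem_compositionTuple {j N : ℕ} {s : Fin j → ℕ} :
    s ∈ compositionTuple j N ↔ ∑ i, s i = N ∧ ∀ i, 1 ≤ s i := by
  rw [compositionTuple, mem_filter, mem_antidiagonalTuple]

theorem lt_of_mem_compositionTuple {j N : ℕ} (hj : 2 ≤ j) {s : Fin j → ℕ}
    (hs : s ∈ compositionTuple j N) (i : Fin j) : s i < N := by
  obtain ⟨hsum, hpos⟩ := mem_compositionTuple.1 hs
  obtain ⟨k, rfl⟩ : ∃ k, j = k + 2 := ⟨j - 2, by omega⟩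
  obtain ⟨i', hi'⟩ := exists_ne i
  rw [← hsum]
  exact single_lt_sum hi' (mem_univ _) (mem_univ _) (hpos i') fun _ _ _ => Nat.zero_le _

end Finset.Nat

-- Clearing denominators, this is `(m + k) ^ 2 ≤ 2 * (m ^ 2 + k ^ 2)`; when `m` or `k` is `0`
-- the left side vanishes because `(0 : ℝ)⁻¹ = 0`.
theorem inv_sq_mul_inv_sq_le (m k : ℕ) :
    ((m : ℝ) ^ 2)⁻¹ * ((k : ℝ) ^ 2)⁻¹ ≤
      2 * (((m : ℝ) + k) ^ 2)⁻¹ * (((m : ℝ) ^ 2)⁻¹ + ((k : ℝ) ^ 2)⁻¹) := by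
  rcases m.eq_zero_or_pos with rfl | hm
  · rw [Nat.cast_zero, zero_pow two_ne_zero, inv_zero, zero_mul]; positivity
  rcases k.eq_zero_or_pos with rfl | hk
  · rw [Nat.cast_zero, zero_pow two_ne_zero, inv_zero, mul_zero]; positivity
  have hm' : (0 : ℝ) < m := by exact_mod_cast hm
  have hk' : (0 : ℝ) < k := by exact_mod_cast hk
  field_simp
  nlinarith [sq_nonneg ((m : ℝ) - k)]

theorem sum_range_inv_sq_le_two (n : ℕ) : ∑ i ∈ range n, ((i : ℝ) ^ 2)⁻¹ ≤ 2 := by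
  rcases n.eq_zero_or_pos with rfl | hn
  · simp
  rw [range_eq_Ico, sum_eq_sum_Ico_succ_bot hn, Ico_add_one_left_eq_Ioo]
  simpa using sum_Ioo_inv_sq_le (α := ℝ) 0 n

theorem sum_antidiagonal_inv_sq_mul_le (n : ℕ) :
    ∑ p ∈ antidiagonal n, ((p.1 : ℝ) ^ 2)⁻¹ * ((p.2 : ℝ) ^ 2)⁻¹ ≤ 8 * ((n : ℝ) ^ 2)⁻¹ := by
  have hmass : ∑ p ∈ antidiagonal n, ((p.1 : ℝ) ^ 2)⁻¹ ≤ 2 := by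
    rw [sum_antidiagonal_eq_sum_range_succ_mk]
    exact sum_range_inv_sq_le_two _
  have hswap : ∑ p ∈ antidiagonal n, ((p.2 : ℝ) ^ 2)⁻¹ = ∑ p ∈ antidiagonal n, ((p.1 : ℝ) ^ 2)⁻¹ :=
    sum_antidiagonal_swap.symm
  calc ∑ p ∈ antidiagonal n, ((p.1 : ℝ) ^ 2)⁻¹ * ((p.2 : ℝ) ^ 2)⁻¹
      ≤ ∑ p ∈ antidiagonal n, 2 * ((n : ℝ) ^ 2)⁻¹ * (((p.1 : ℝ) ^ 2)⁻¹ + ((p.2 : ℝ) ^ 2)⁻¹) := by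
        refine sum_le_sum fun p hp => ?_
        rw [← mem_antidiagonal.1 hp, Nat.cast_add]
        exact inv_sq_mul_inv_sq_le _ _
    _ = 2 * ((n : ℝ) ^ 2)⁻¹ * (2 * ∑ p ∈ antidiagonal n, ((p.1 : ℝ) ^ 2)⁻¹) := by
        rw [← mul_sum, sum_add_distrib, hswap]; ring
    _ ≤ 8 * ((n : ℝ) ^ 2)⁻¹ := by nlinarith [inv_nonneg.2 (sq_nonneg (n : ℝ))]

theorem sum_compositionTuple_prod_le {x : ℕ → ℝ} {θ E : ℝ} (hθ : 0 ≤ θ) (hE : 0 ≤ E)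
    (hx0 : ∀ n, 0 ≤ x n) {j N : ℕ} (hj : 2 ≤ j)
    (hx : ∀ n, 1 ≤ n → n < N → x n ≤ θ * E ^ n * ((n : ℝ) ^ 2)⁻¹) :
    ∑ s ∈ compositionTuple j N, ∏ i, x (s i) ≤
      θ ^ j * E ^ N * (8 ^ (j - 1) * ((N : ℝ) ^ 2)⁻¹) := by
  obtain ⟨k, rfl⟩ : ∃ k, j = k + 1 := ⟨j - 1, by omega⟩
  calc ∑ s ∈ compositionTuple (k + 1) N, ∏ i, x (s i)
      ≤ ∑ s ∈ compositionTuple (k + 1) N, ∏ i, θ * E ^ s i * ((s i : ℝ) ^ 2)⁻¹ := by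
        refine sum_le_sum fun s hs => prod_le_prod (fun i _ => hx0 _) fun i _ => ?_
        exact hx _ ((mem_compositionTuple.1 hs).2 i) (lt_of_mem_compositionTuple hj hs i)
    _ = θ ^ (k + 1) * E ^ N * ∑ s ∈ compositionTuple (k + 1) N, ∏ i, ((s i : ℝ) ^ 2)⁻¹ := by
        rw [mul_sum]
        refine sum_congr rfl fun s hs => ?_
        rw [prod_mul_distrib, prod_mul_distrib, prod_const, card_univ, Fintype.card_fin,
          prod_pow_eq_pow_sum, (mem_compositionTuple.1 hs).1]
    _ ≤ θ ^ (k + 1) * E ^ N * ∑ s ∈ antidiagonalTuple (k + 1) N, ∏ i, ((s i : ℝ) ^ 2)⁻¹ := by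
        gcongr _ * ?_
        exact sum_le_sum_of_subset_of_nonneg (filter_subset _ _) fun s _ _ =>
          prod_nonneg fun i _ => by positivity
    _ ≤ θ ^ (k + 1) * E ^ N * (8 ^ (k + 1 - 1) * ((N : ℝ) ^ 2)⁻¹) := by
        gcongr
        exact sum_antidiagonalTuple_prod_le (fun n => inv_nonneg.2 (sq_nonneg (n : ℝ)))
          (by norm_num) sum_antidiagonal_inv_sq_mul_le k N

theorem sum_tree_terms_le {x : ℕ → ℝ} {C θ E : ℝ} (hC : 0 ≤ C) (hθ : 0 ≤ θ) (hE : 0 ≤ E)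
    (hCθ : 16 * C * θ ≤ 1) (hx0 : ∀ n, 0 ≤ x n) {N : ℕ}
    (hx : ∀ n, 1 ≤ n → n < N → x n ≤ θ * E ^ n * ((n : ℝ) ^ 2)⁻¹) :
    ∑ j ∈ Icc 2 N, C ^ (j + 1) * ∑ s ∈ compositionTuple j N, ∏ i, x (s i) ≤
      16 * C ^ 3 * θ ^ 2 * (E ^ N * ((N : ℝ) ^ 2)⁻¹) := by
  set r := 8 * C * θ
  have hr : 0 ≤ r := by positivity
  have hwN : 0 ≤ E ^ N * ((N : ℝ) ^ 2)⁻¹ := by positivity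
  calc ∑ j ∈ Icc 2 N, C ^ (j + 1) * ∑ s ∈ compositionTuple j N, ∏ i, x (s i)
      ≤ ∑ j ∈ Icc 2 N, C ^ (j + 1) * (θ ^ j * E ^ N * (8 ^ (j - 1) * ((N : ℝ) ^ 2)⁻¹)) := by
        gcongr with j hj
        exact sum_compositionTuple_prod_le hθ hE hx0 (mem_Icc.1 hj).1 hx
    _ = C / 8 * (E ^ N * ((N : ℝ) ^ 2)⁻¹) * ∑ j ∈ Ico 2 (N + 1), r ^ j := by
        rw [mul_sum, Ico_add_one_right_eq_Icc]
        refine sum_congr rfl fun j hj => ?_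
        obtain ⟨k, rfl⟩ : ∃ k, j = k + 1 := ⟨j - 1, by have := (mem_Icc.1 hj).1; omega⟩
        simp only [r, Nat.add_sub_cancel]
        ring
    _ ≤ C / 8 * (E ^ N * ((N : ℝ) ^ 2)⁻¹) * (r ^ 2 / (1 - r)) := by
        gcongr
        exact geom_sum_Ico_le_of_lt_one hr (by linarith)
    _ ≤ C / 8 * (E ^ N * ((N : ℝ) ^ 2)⁻¹) * (2 * r ^ 2) := by
        gcongr
        rw [div_le_iff₀ (by linarith)]
        nlinarith
    _ = 16 * C ^ 3 * θ ^ 2 * (E ^ N * ((N : ℝ) ^ 2)⁻¹) := by ring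

theorem mul_pow_le_mul_pow_mul_inv_sq {C D θ : ℝ} (hC : 0 ≤ C) (hD : 0 ≤ D) (hθ : 0 < θ)
    {N : ℕ} (hN : 1 ≤ N) :
    D * C ^ N ≤ θ / 2 * ((4 * C * (1 + 2 * D / θ)) ^ N * ((N : ℝ) ^ 2)⁻¹) := by
  have hN0 : (0 : ℝ) < N := by exact_mod_cast hN
  have hsq : (N : ℝ) ^ 2 ≤ 4 ^ N := by
    rw [show (4 : ℝ) ^ N = (2 ^ N) ^ 2 by rw [← pow_mul, mul_comm, pow_mul]; norm_num]
    gcongr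
    exact_mod_cast Nat.lt_two_pow_self.le
  have hpow : 2 * D / θ ≤ (1 + 2 * D / θ) ^ N :=
    (le_add_of_nonneg_left zero_le_one).trans
      (le_self_pow₀ (le_add_of_nonneg_right (by positivity)) (by omega))
  calc D * C ^ N = θ / 2 * (C ^ N * (2 * D / θ) * (N : ℝ) ^ 2 * ((N : ℝ) ^ 2)⁻¹) := by
        field_simp
    _ ≤ θ / 2 * (C ^ N * (1 + 2 * D / θ) ^ N * 4 ^ N * ((N : ℝ) ^ 2)⁻¹) := by gcongr
    _ = θ / 2 * ((4 * C * (1 + 2 * D / θ)) ^ N * ((N : ℝ) ^ 2)⁻¹) := by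
        rw [mul_pow, mul_pow]; ring

theorem exists_pow_bound_of_tree_recursion {x : ℕ → ℝ} {C D : ℝ} (hC : 0 < C) (hD : 0 ≤ D)
    (hx0 : ∀ n, 0 ≤ x n)
    (hrec : ∀ N, 1 ≤ N → x N ≤ D * C ^ N +
      ∑ j ∈ Icc 2 N, C ^ (j + 1) * ∑ s ∈ compositionTuple j N, ∏ i, x (s i)) :
    ∃ θ E : ℝ, 0 < θ ∧ 0 < E ∧ ∀ N, 1 ≤ N → x N ≤ θ * E ^ N := by
  set θ : ℝ := (32 * C * (1 + C ^ 2))⁻¹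
  set E : ℝ := 4 * C * (1 + 2 * D / θ)
  have hθ : 0 < θ := by positivity
  have hE : 0 < E := by positivity
  have hCθ : 16 * C * θ ≤ 1 := by
    simp only [θ]; rw [← div_eq_mul_inv, div_le_one (by positivity)]; nlinarith
  have hC3θ : 32 * C ^ 3 * θ ≤ 1 := by
    simp only [θ]; rw [← div_eq_mul_inv, div_le_one (by positivity)]; nlinarith
  have key : ∀ N, 1 ≤ N → x N ≤ θ * (E ^ N * ((N : ℝ) ^ 2)⁻¹) := by
    intro N
    induction N using Nat.strong_induction_on with
    | _ N ih =>
    intro hN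
    have hwN : 0 ≤ E ^ N * ((N : ℝ) ^ 2)⁻¹ := by positivity
    have htree := sum_tree_terms_le hC.le hθ.le hE.le hCθ hx0
      fun n hn hnN => (ih n hnN hn).trans_eq (mul_assoc _ _ _).symm
    calc x N ≤ _ := hrec N hN
      _ ≤ θ / 2 * (E ^ N * ((N : ℝ) ^ 2)⁻¹) + 16 * C ^ 3 * θ ^ 2 * (E ^ N * ((N : ℝ) ^ 2)⁻¹) :=
        add_le_add (mul_pow_le_mul_pow_mul_inv_sq hC.le hD hθ hN) htree
      _ ≤ θ * (E ^ N * ((N : ℝ) ^ 2)⁻¹) := by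
        nlinarith [mul_le_mul_of_nonneg_left hC3θ (mul_nonneg hθ.le hwN)]
  refine ⟨θ, E, hθ, hE, fun N hN => (key N hN).trans ?_⟩
  gcongr
  exact mul_le_of_le_one_right (by positivity) (inv_le_one_of_one_le₀ (by
    exact_mod_cast Nat.one_le_pow _ _ hN))

theorem multinomial_tree_term_eq (a : ℕ → ℝ) (C : ℝ) (j N : ℕ) :
    ((j.factorial : ℝ))⁻¹ * C * ∑ s ∈ compositionTuple j N,
        ((N.factorial : ℝ) / ∏ i, ((s i).factorial : ℝ)) * (j.factorial : ℝ) * C ^ j *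
          ∏ i, a (s i) =
      N.factorial * (C ^ (j + 1) * ∑ s ∈ compositionTuple j N,
        ∏ i, (a (s i) / (s i).factorial)) := by
  simp only [mul_sum]
  refine sum_congr rfl fun s _ => ?_
  have hprod : (∏ i, ((s i).factorial : ℝ)) ≠ 0 :=
    prod_ne_zero_iff.2 fun i _ => by positivity
  rw [prod_div_distrib]
  field_simp
  ring

/-- Quantitative core of the tree-sum solution of the Maurer–Cartan recursion:
if `a N ≤ b N + ∑_{j=2}^N (1/j!)·C·∑_{s₁+⋯+s_j=N, sᵢ≥1} (N!/(s₁!⋯s_j!))·j!·C^j·a_{s₁}⋯a_{s_j}`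
with `b N ≤ D·N!·C^N` (the bounded part `α₀`, with the L∞ structure maps bounded by
`‖l_j‖ ≤ j!·C^j` and the homotopy operator by `C`), then `a N ≤ D'·N!·E^N` for
constants `D', E` independent of `N`; i.e. the solution is a bounded cochain. -/
theorem tree_sum_bounded (C D : ℝ) (hC : 0 < C) (hD : 0 < D) (a b : ℕ → ℝ)
    (ha0 : ∀ N, 0 ≤ a N)
    (hb : ∀ N, 1 ≤ N → b N ≤ D * N.factorial * C ^ N)
    (hrec : ∀ N, 1 ≤ N → a N ≤ b N +
      ∑ j ∈ Finset.Icc 2 N, ((j.factorial : ℝ))⁻¹ * C *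
        ∑ s ∈ (Finset.Nat.antidiagonalTuple j N).filter (fun s => ∀ i, 1 ≤ s i),
          ((N.factorial : ℝ) / ∏ i, ((s i).factorial : ℝ)) * (j.factorial : ℝ) * C ^ j *
            ∏ i, a (s i)) :
    ∃ D' E : ℝ, 0 < D' ∧ 0 < E ∧ ∀ N, 1 ≤ N → a N ≤ D' * N.factorial * E ^ N := by
  set x : ℕ → ℝ := fun n => a n / n.factorial
  have hxrec : ∀ N, 1 ≤ N → x N ≤ D * C ^ N +
      ∑ j ∈ Icc 2 N, C ^ (j + 1) * ∑ s ∈ compositionTuple j N, ∏ i, x (s i) := by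
    intro N hN
    rw [div_le_iff₀ (by positivity)]
    calc a N ≤ _ := hrec N hN
      _ ≤ D * N.factorial * C ^ N + ∑ j ∈ Icc 2 N, N.factorial * (C ^ (j + 1) *
            ∑ s ∈ compositionTuple j N, ∏ i, x (s i)) :=
        add_le_add (hb N hN) (sum_congr rfl fun j _ => multinomial_tree_term_eq a C j N).le
      _ = _ := by rw [← mul_sum]; ring
  have hx0 : ∀ n, 0 ≤ x n := fun n => div_nonneg (ha0 n) (by positivity)
  obtain ⟨D', E, hD', hE, hx⟩ := exists_pow_bound_of_tree_recursion hC hD.le hx0 hxrec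
  refine ⟨D', E, hD', hE, fun N hN => ?_⟩
  have hxN := hx N hN
  rwa [div_le_iff₀ (by positivity), mul_right_comm] at hxN
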